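/- arXiv:2311.02865 — 4 statements merged into one kernel-verified Lean document; each statement's English description precedes it below -/
import Mathlib

section
/- Let n be a positive integer and let α ∈ (0, 1/2). Let t_n* ∈ (0, n) be the unique solution of P_n(t_n*) = α. Then for every Lebesgue-measurable set R ⊆ [0,1]^n of positive volume satisfying ∫_R ‖x‖₁ dx ≤ n·α·vol(R), one has vol(R) ≤ V_n(t_n*); i.e., the truncated cube 𝒯_n(t_n*) maximizes volume among all subsets of the unit cube whose average first moment is at most nα. -/
open MeasureTheory

/-- The truncated cube `𝒯_n(t) = {x ∈ [0,1]^n : ∑ i, x i ≤ t}`. -/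
def truncCube (n : ℕ) (t : ℝ) : Set (Fin n → ℝ) :=
  {x | (∀ i, x i ∈ Set.Icc (0 : ℝ) 1) ∧ ∑ i, x i ≤ t}

/-- Volume of the truncated cube. -/
noncomputable def truncVol (n : ℕ) (t : ℝ) : ℝ :=
  (volume (truncCube n t)).toReal

/-- Average first moment of the truncated cube. -/
noncomputable def truncMoment (n : ℕ) (t : ℝ) : ℝ :=
  (1 / (n * truncVol n t)) * ∫ x in truncCube n t, ∑ i, x i

/-!
Bathtub principle. Inside the unit cube, `𝒯_n(t)` is the sublevel set `{‖x‖₁ ≤ t}` of the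
integrand, so `∫_{𝒯_n(t)} (‖x‖₁ - t) ≤ ∫_R (‖x‖₁ - t)` for every `R` in the cube: exchanging
the points of `𝒯_n(t) \ R` for those of `R \ 𝒯_n(t)` can only increase the integral.
Since `∫_{𝒯_n(t)} ‖x‖₁ = nα V_n(t)` and `∫_R ‖x‖₁ ≤ nα vol R`, this reads
`(t - nα) (vol R - V_n(t)) ≤ 0`, and `nα < t` because `‖x‖₁ < t` on the box `[0, t/n)ⁿ ⊆ 𝒯_n(t)`.
-/

open Set

section Bathtub

variable {X : Type*} [MeasurableSpace X] {μ : Measure X} {f g : X → ℝ} {s t : Set X}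

theorem setIntegral_le_of_nonpos_on_sdiff_of_nonneg_on_sdiff
    (hs : MeasurableSet s) (ht : MeasurableSet t)
    (hgs : IntegrableOn g s μ) (hgt : IntegrableOn g t μ)
    (hnonpos : ∀ x ∈ s \ t, g x ≤ 0) (hnonneg : ∀ x ∈ t \ s, 0 ≤ g x) :
    ∫ x in s, g x ∂μ ≤ ∫ x in t, g x ∂μ := by
  rw [← integral_indicator hs, ← integral_indicator ht]
  refine integral_mono (hgs.integrable_indicator hs) (hgt.integrable_indicator ht) fun x => ?_
  by_cases hxs : x ∈ s <;> by_cases hxt : x ∈ t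
  · simp [hxs, hxt]
  · simpa [hxs, hxt] using hnonpos x ⟨hxs, hxt⟩
  · simpa [hxs, hxt] using hnonneg x ⟨hxt, hxs⟩
  · simp [hxs, hxt]

theorem setIntegral_sub_const (hf : IntegrableOn f s μ) (hs : μ s ≠ ⊤) (c : ℝ) :
    ∫ x in s, (f x - c) ∂μ = ∫ x in s, f x ∂μ - μ.real s * c := by
  rw [integral_sub hf (integrableOn_const hs), setIntegral_const, smul_eq_mul]

end Bathtub

section Cube

variable {n : ℕ} {t : ℝ}

def unitCube (n : ℕ) : Set (Fin n → ℝ) := {x | ∀ i, x i ∈ Icc (0 : ℝ) 1}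

theorem isCompact_unitCube : IsCompact (unitCube n) := by
  convert isCompact_univ_pi fun _ : Fin n => isCompact_Icc (a := (0 : ℝ)) (b := 1)
  ext; simp only [unitCube, mem_pi, mem_univ, true_implies, mem_ofPred_eq]

theorem volume_ne_top_of_subset_unitCube {A : Set (Fin n → ℝ)} (hA : A ⊆ unitCube n) :
    volume A ≠ ⊤ :=
  (measure_mono hA |>.trans_lt isCompact_unitCube.measure_lt_top).ne

theorem integrableOn_sum_of_subset_unitCube {A : Set (Fin n → ℝ)} (hA : A ⊆ unitCube n) :
    IntegrableOn (fun x => ∑ i, x i) A :=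
  ((continuous_finsetSum _ fun i _ => continuous_apply i).continuousOn.integrableOn_compact
    isCompact_unitCube).mono_set hA

theorem truncCube_subset_unitCube : truncCube n t ⊆ unitCube n := fun _ hx => hx.1

theorem measurableSet_truncCube : MeasurableSet (truncCube n t) := by
  have hcube : IsClosed (unitCube n) := isCompact_unitCube.isClosed
  exact (hcube.inter (isClosed_le (continuous_finsetSum _ fun i _ => continuous_apply i)
    continuous_const)).measurableSet

theorem setIntegral_truncCube_lt (ht : 0 < t) (htn : t ≤ n) :
    ∫ x in truncCube n t, ∑ i, x i < t * truncVol n t := by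
  have hn : 0 < n := by exact_mod_cast ht.trans_le htn
  have hbox : univ.pi (fun _ => Ico 0 (t / n)) ⊆
      Function.support (fun x : Fin n → ℝ => t - ∑ i, x i) ∩ truncCube n t := by
    intro x hx
    have hx' : ∀ i, x i ∈ Ico 0 (t / n) := fun i => hx i (mem_univ i)
    have hsum : ∑ i, x i < t := by
      calc ∑ i, x i < ∑ _i : Fin n, t / n :=
            Finset.sum_lt_sum_of_nonempty ⟨⟨0, hn⟩, Finset.mem_univ _⟩ fun i _ => (hx' i).2
        _ = t := by
          simp only [Finset.sum_const, Finset.card_univ, Fintype.card_fin, nsmul_eq_mul]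
          field_simp
    exact ⟨sub_ne_zero.2 hsum.ne',
      fun i => ⟨(hx' i).1, (hx' i).2.le.trans (div_le_one_of_le₀ htn n.cast_nonneg)⟩, hsum.le⟩
  have hTfin := volume_ne_top_of_subset_unitCube (truncCube_subset_unitCube (n := n) (t := t))
  have hint := integrableOn_sum_of_subset_unitCube (truncCube_subset_unitCube (n := n) (t := t))
  have hpos : 0 < ∫ x in truncCube n t, (t - ∑ i, x i) := by
    refine (setIntegral_pos_iff_support_of_nonneg_ae ?_ ((integrableOn_const hTfin).sub hint)).2 ?_
    · filter_upwards [ae_restrict_mem measurableSet_truncCube] with x hx using sub_nonneg.2 hx.2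
    · refine lt_of_lt_of_le ?_ (measure_mono hbox)
      simp only [volume_pi_pi, Real.volume_Ico, sub_zero, Finset.prod_const, Finset.card_univ,
        Fintype.card_fin]
      exact ENNReal.pow_pos (ENNReal.ofReal_pos.2 (by positivity)) n
  rw [integral_sub (integrableOn_const (C := t) hTfin) hint, setIntegral_const, smul_eq_mul] at hpos
  rw [truncVol, ← measureReal_def]
  linarith

theorem truncVol_pos (ht : 0 < t) (htn : t ≤ n) : 0 < truncVol n t := by
  have hlt := setIntegral_truncCube_lt ht htn
  have hnonneg : 0 ≤ ∫ x in truncCube n t, ∑ i, x i :=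
    setIntegral_nonneg measurableSet_truncCube fun x hx =>
      Finset.sum_nonneg fun i _ => (hx.1 i).1
  by_contra! h
  nlinarith

theorem setIntegral_truncCube_eq (hn : n ≠ 0) (hV : truncVol n t ≠ 0) :
    ∫ x in truncCube n t, ∑ i, x i = n * truncMoment n t * truncVol n t := by
  rw [truncMoment]
  field_simp

theorem setIntegral_truncCube_sub_le {R : Set (Fin n → ℝ)} (hR : MeasurableSet R)
    (hRcube : R ⊆ unitCube n) :
    ∫ x in truncCube n t, (∑ i, x i - t) ≤ ∫ x in R, (∑ i, x i - t) := by
  refine setIntegral_le_of_nonpos_on_sdiff_of_nonneg_on_sdiff measurableSet_truncCube hR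
    ((integrableOn_sum_of_subset_unitCube truncCube_subset_unitCube).sub
      (integrableOn_const (volume_ne_top_of_subset_unitCube truncCube_subset_unitCube)))
    ((integrableOn_sum_of_subset_unitCube hRcube).sub
      (integrableOn_const (volume_ne_top_of_subset_unitCube hRcube)))
    (fun x hx => sub_nonpos.2 hx.1.2) fun x hx => ?_
  exact sub_nonneg.2 (not_le.1 fun h => hx.2 ⟨hRcube hx.1, h⟩).le

end Cube

theorem optimal_shaping_general
    (n : ℕ) (α : ℝ)
    (t : ℝ) (ht : t ∈ Set.Ioo (0 : ℝ) n) (htα : truncMoment n t = α)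
    (R : Set (Fin n → ℝ)) (hRmeas : MeasurableSet R)
    (hRcube : R ⊆ {x | ∀ i, x i ∈ Set.Icc (0 : ℝ) 1})
    (hRmoment : ∫ x in R, ∑ i, x i ≤ n * α * (volume R).toReal) :
    (volume R).toReal ≤ truncVol n t := by
  have hn : n ≠ 0 := (Nat.cast_pos.1 (ht.1.trans ht.2)).ne'
  have hV := truncVol_pos ht.1 ht.2.le
  have hT := setIntegral_truncCube_eq hn hV.ne'
  rw [htα] at hT
  have hαt : n * α < t := by
    have := setIntegral_truncCube_lt ht.1 ht.2.le
    nlinarith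
  have hbath := setIntegral_truncCube_sub_le hRmeas hRcube (t := t)
  rw [setIntegral_sub_const (integrableOn_sum_of_subset_unitCube truncCube_subset_unitCube)
      (volume_ne_top_of_subset_unitCube truncCube_subset_unitCube),
    setIntegral_sub_const (integrableOn_sum_of_subset_unitCube hRcube)
      (volume_ne_top_of_subset_unitCube hRcube), hT] at hbath
  rw [measureReal_def, measureReal_def, ← truncVol] at hbath
  nlinarith

theorem optimal_shaping
    (n : ℕ) (hn : 0 < n) (α : ℝ) (hα : α ∈ Set.Ioo (0 : ℝ) (1 / 2))
    (t : ℝ) (ht : t ∈ Set.Ioo (0 : ℝ) n) (htα : truncMoment n t = α)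
    (huniq : ∀ s ∈ Set.Ioo (0 : ℝ) (n : ℝ), truncMoment n s = α → s = t)
    (R : Set (Fin n → ℝ)) (hRmeas : MeasurableSet R)
    (hRcube : R ⊆ {x | ∀ i, x i ∈ Set.Icc (0 : ℝ) 1})
    (hRpos : 0 < volume R)
    (hRmoment : ∫ x in R, ∑ i, x i ≤ n * α * (volume R).toReal) :
    (volume R).toReal ≤ truncVol n t :=
  optimal_shaping_general n α t ht htα R hRmeas hRcube hRmoment
end

section
/- As α → 0⁺, the limiting log-shaping-gain satisfies lim_{α→0⁺} ( h_max(α) − log(2α) ) = 1 − log 2; i.e., the ultimate shaping gain of the average-intensity-limited channel equals e/2 (about 1.33 dB in optical SNR). -/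
open Filter Real Topology

/-!
Parametrize by the rate `m = μ*(α)` instead of by `α`. Writing `t = m / (e^m - 1)`, the moment
condition reads `m α = 1 - t`, so `h_max(α) - log (2α)` becomes
`1 - t + log (1 - e^{-m}) - log (1 - t) - log 2`, which tends to `1 - log 2` as `m → ∞` since
`t → 0`. Finally `α ≥ 1 / (m + 2)` (from `e^m - 1 ≥ m + m² / 2`), so `m → ∞` as `α → 0⁺`.
-/

/-- The mean of the density proportional to `e^{-m x}` on `[0, 1]`. -/
noncomputable def truncExpMean (m : ℝ) : ℝ := 1 / m - 1 / (exp m - 1)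

lemma lt_exp_sub_one {m : ℝ} (hm : m ≠ 0) : m < exp m - 1 := by
  linarith [add_one_lt_exp hm]

lemma one_div_add_two_le_truncExpMean {m : ℝ} (hm : 0 < m) : 1 / (m + 2) ≤ truncExpMean m := by
  have hquad : m + m ^ 2 / 2 ≤ exp m - 1 := by linarith [quadratic_le_exp_of_nonneg hm.le]
  calc 1 / (m + 2) = 1 / m - 1 / (m + m ^ 2 / 2) := by field_simp; ring
    _ ≤ 1 / m - 1 / (exp m - 1) := by gcongr

lemma tendsto_atTop_of_eq_truncExpMean {f : ℝ → ℝ}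
    (hf : ∀ᶠ α in 𝓝[>] 0, 0 < f α ∧ α = truncExpMean (f α)) :
    Tendsto f (𝓝[>] 0) atTop := by
  have hlower : ∀ᶠ α in 𝓝[>] 0, α⁻¹ + -2 ≤ f α := by
    filter_upwards [hf] with α ⟨hpos, hα⟩
    have hmean := one_div_add_two_le_truncExpMean hpos
    rw [← hα, one_div] at hmean
    linarith [inv_le_of_inv_le₀ (by linarith) hmean]
  exact tendsto_atTop_mono' _ hlower (tendsto_atTop_add_const_right _ _ tendsto_inv_nhdsGT_zero)

lemma tendsto_div_exp_sub_one_atTop : Tendsto (fun m => m / (exp m - 1)) atTop (𝓝 0) := by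
  refine tendsto_of_tendsto_of_tendsto_of_le_of_le' tendsto_const_nhds
    (tendsto_const_nhds.div_atTop tendsto_id : Tendsto (fun m : ℝ => 2 / m) atTop (𝓝 0)) ?_ ?_
  all_goals filter_upwards [eventually_gt_atTop 0] with m hm
  · exact (div_pos hm (hm.trans (lt_exp_sub_one hm.ne'))).le
  · have hquad : m ^ 2 / 2 ≤ exp m - 1 := by linarith [quadratic_le_exp_of_nonneg hm.le]
    calc m / (exp m - 1) ≤ m / (m ^ 2 / 2) := by gcongr
      _ = 2 / m := by field_simp

lemma log_shaping_gain_eq {m : ℝ} (hm : 0 < m) :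
    (m * truncExpMean m - log (m / (1 - exp (-m)))) - log (2 * truncExpMean m) =
      1 - m / (exp m - 1) + log (1 - exp (-m)) - log (1 - m / (exp m - 1)) - log 2 := by
  have hexp_sub_one : 0 < exp m - 1 := hm.trans (lt_exp_sub_one hm.ne')
  have hone_sub_t : 0 < 1 - m / (exp m - 1) := by
    rw [sub_pos, div_lt_one hexp_sub_one]; exact lt_exp_sub_one hm.ne'
  have hexp_neg : 0 < 1 - exp (-m) := by simpa using exp_lt_one_iff.2 (neg_lt_zero.2 hm)
  have hmean : truncExpMean m = (1 - m / (exp m - 1)) / m := by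
    unfold truncExpMean; field_simp
  rw [hmean, mul_div_cancel₀ _ hm.ne', log_div hm.ne' hexp_neg.ne',
    log_mul two_ne_zero (div_pos hone_sub_t hm).ne', log_div hone_sub_t.ne' hm.ne']
  ring

lemma tendsto_log_shaping_gain_atTop :
    Tendsto (fun m => 1 - m / (exp m - 1) + log (1 - exp (-m)) - log (1 - m / (exp m - 1))
      - log 2) atTop (𝓝 (1 - log 2)) := by
  have hone_sub_t : Tendsto (fun m => 1 - m / (exp m - 1)) atTop (𝓝 1) := by
    simpa using tendsto_const_nhds.sub tendsto_div_exp_sub_one_atTop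
  have hexp_neg : Tendsto (fun m => 1 - exp (-m)) atTop (𝓝 1) := by
    simpa using tendsto_const_nhds.sub tendsto_exp_neg_atTop_nhds_zero
  have hlog := (continuousAt_log one_ne_zero).tendsto
  have hlim := ((hone_sub_t.add (hlog.comp hexp_neg)).sub
    (hlog.comp hone_sub_t)).sub (tendsto_const_nhds (x := log 2))
  simpa only [Function.comp_def, log_one, add_zero, sub_zero] using hlim

theorem ultimate_shaping_gain_limit
    (μ : ℝ → ℝ)
    (hμ : ∀ α ∈ Set.Ioo (0 : ℝ) (1 / 2),
      0 < μ α ∧ α = 1 / μ α - 1 / (Real.exp (μ α) - 1)) :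
    Tendsto
      (fun α : ℝ =>
        (μ α * α - Real.log (μ α / (1 - Real.exp (-μ α)))) - Real.log (2 * α))
      (nhdsWithin 0 (Set.Ioi 0)) (nhds (1 - Real.log 2)) := by
  have hμ_eventually : ∀ᶠ α in 𝓝[>] 0, 0 < μ α ∧ α = truncExpMean (μ α) :=
    Filter.mem_of_superset (Ioo_mem_nhdsGT (by norm_num : (0 : ℝ) < 1 / 2)) hμ
  refine (tendsto_log_shaping_gain_atTop.comp
    (tendsto_atTop_of_eq_truncExpMean hμ_eventually)).congr' ?_
  filter_upwards [hμ_eventually] with α ⟨hpos, hα⟩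
  rw [Function.comp_apply]
  generalize μ α = m at hpos hα ⊢
  subst hα
  exact (log_shaping_gain_eq hpos).symm
end

section
/- Define D(x) = s_x·√(K'(s_x)) = √( 1 − s_x²·e^{s_x}/(e^{s_x} − 1)² ) for x ∈ (1/2, 1). Then D is non-decreasing on (1/2,1) and bounded (in particular 0 < D(x) < 1 for all x ∈ (1/2,1)). -/
/-!
Writing `e^u − 1 = 2 e^{u/2} sinh (u/2)` turns `u² e^u / (e^u − 1)²` into
`((u/2) / sinh (u/2))²`. This lies in `(0, 1)` and strictly decreases for `u > 0`, since
`sinh t / t` is the slope of a secant through the origin of the strictly convex function `sinh`.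
As `K'(u) = (1 − u² e^u / (e^u − 1)²) / u² > 0`, `K` is strictly increasing, so `x ↦ s_x` is
monotone and `D x = √(1 − ((s_x/2) / sinh (s_x/2))²)` is monotone with values in `(0, 1)`.
-/

/-- `K(s) = e^s/(e^s − 1) − 1/s`. -/
noncomputable def K (s : ℝ) : ℝ := Real.exp s / (Real.exp s - 1) - 1 / s

open Real Set

lemma exp_sub_one_eq_two_mul_exp_half_mul_sinh (u : ℝ) :
    exp u - 1 = 2 * exp (u / 2) * sinh (u / 2) := by
  have hsq : exp (u / 2) * exp (u / 2) = exp u := by rw [← exp_add, add_halves]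
  have hinv : exp (u / 2) * exp (-(u / 2)) = 1 := by rw [← exp_add, add_neg_cancel, exp_zero]
  rw [sinh_eq]
  linear_combination -hsq + hinv

lemma sq_mul_exp_div_exp_sub_one_sq (u : ℝ) :
    u ^ 2 * exp u / (exp u - 1) ^ 2 = (u / 2 / sinh (u / 2)) ^ 2 := by
  have hsq : exp (u / 2) ^ 2 = exp u := by rw [sq, ← exp_add, add_halves]
  rw [exp_sub_one_eq_two_mul_exp_half_mul_sinh, mul_pow, mul_pow, hsq, div_pow, div_pow,
    mul_right_comm (2 ^ 2 : ℝ), mul_div_mul_right _ _ (exp_pos u).ne', div_div]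

lemma strictConvexOn_sinh : StrictConvexOn ℝ (Ici 0) sinh :=
  StrictMonoOn.strictConvexOn_of_deriv (convex_Ici 0) continuous_sinh.continuousOn
    (by rw [Real.deriv_sinh]; exact cosh_strictMonoOn.mono interior_subset)

lemma sinh_div_self_strictMonoOn : StrictMonoOn (fun t => sinh t / t) (Ioi 0) := by
  intro a ha b hb hab
  simpa only [sinh_zero, sub_zero] using strictConvexOn_sinh.secant_strict_mono self_mem_Ici
    (Ioi_subset_Ici_self ha) (Ioi_subset_Ici_self hb) (ne_of_gt ha) (ne_of_gt hb) hab

lemma div_sinh_strictAntiOn : StrictAntiOn (fun t => t / sinh t) (Ioi 0) := by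
  intro a (ha : 0 < a) b (hb : 0 < b) hab
  show b / sinh b < a / sinh a
  rw [← inv_div (sinh b) b, ← inv_div (sinh a) a]
  exact (inv_lt_inv₀ (div_pos (sinh_pos_iff.2 hb) hb) (div_pos (sinh_pos_iff.2 ha) ha)).2
    (sinh_div_self_strictMonoOn ha hb hab)

lemma div_sinh_mem_Ioo {t : ℝ} (ht : 0 < t) : t / sinh t ∈ Ioo 0 1 :=
  ⟨div_pos ht (sinh_pos_iff.2 ht), (div_lt_one (sinh_pos_iff.2 ht)).2 (self_lt_sinh_iff.2 ht)⟩

lemma sq_mul_exp_div_exp_sub_one_sq_mem_Ioo {u : ℝ} (hu : 0 < u) :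
    u ^ 2 * exp u / (exp u - 1) ^ 2 ∈ Ioo 0 1 := by
  obtain ⟨h0, h1⟩ := div_sinh_mem_Ioo (half_pos hu)
  rw [sq_mul_exp_div_exp_sub_one_sq]
  exact ⟨pow_pos h0 2, pow_lt_one₀ h0.le h1 two_ne_zero⟩

lemma sq_mul_exp_div_exp_sub_one_sq_strictAntiOn :
    StrictAntiOn (fun u => u ^ 2 * exp u / (exp u - 1) ^ 2) (Ioi 0) := by
  intro a (ha : 0 < a) b (hb : 0 < b) hab
  simp only [sq_mul_exp_div_exp_sub_one_sq]
  exact pow_lt_pow_left₀ (div_sinh_strictAntiOn (half_pos ha) (half_pos hb) (by linarith))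
    (div_sinh_mem_Ioo (half_pos hb)).1.le two_ne_zero

lemma hasDerivAt_K {t : ℝ} (ht : t ≠ 0) :
    HasDerivAt K ((1 - t ^ 2 * exp t / (exp t - 1) ^ 2) / t ^ 2) t := by
  have he : exp t - 1 ≠ 0 := sub_ne_zero.2 (mt (exp_eq_one_iff t).1 ht)
  refine (((hasDerivAt_exp t).div ((hasDerivAt_exp t).sub_const 1) he).sub
    ((hasDerivAt_const t (1 : ℝ)).div (hasDerivAt_id' t) ht)).congr_deriv ?_
  field_simp
  ring

lemma K_strictMonoOn : StrictMonoOn K (Ioi 0) :=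
  strictMonoOn_of_hasDerivWithinAt_pos (convex_Ioi 0)
    (fun t ht => (hasDerivAt_K (ne_of_gt ht)).continuousAt.continuousWithinAt)
    (fun t ht => (hasDerivAt_K (ne_of_gt (interior_subset ht))).hasDerivWithinAt)
    (fun t ht => by
      rw [interior_Ioi] at ht
      exact div_pos (sub_pos.2 (sq_mul_exp_div_exp_sub_one_sq_mem_Ioo ht).2) (pow_pos ht 2))

theorem D_monotone_and_bounded
    (s : ℝ → ℝ)
    (hs : ∀ x ∈ Set.Ioo (1 / 2 : ℝ) 1, 0 < s x ∧ K (s x) = x)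
    (D : ℝ → ℝ)
    (hD : D = fun x =>
      Real.sqrt (1 - s x ^ 2 * Real.exp (s x) / (Real.exp (s x) - 1) ^ 2)) :
    MonotoneOn D (Set.Ioo (1 / 2 : ℝ) 1) ∧
    (∀ x ∈ Set.Ioo (1 / 2 : ℝ) 1, 0 < D x ∧ D x < 1) := by
  subst hD
  have hs_mono : MonotoneOn s (Ioo (1 / 2) 1) := fun x hx y hy hxy => by
    obtain ⟨hsx, hKx⟩ := hs x hx
    obtain ⟨hsy, hKy⟩ := hs y hy
    exact (K_strictMonoOn.le_iff_le hsx hsy).1 (by rwa [hKx, hKy])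
  refine ⟨fun x hx y hy hxy => sqrt_le_sqrt (sub_le_sub_left ?_ 1), fun x hx => ?_⟩
  · exact sq_mul_exp_div_exp_sub_one_sq_strictAntiOn.antitoneOn (hs x hx).1 (hs y hy).1
      (hs_mono hx hy hxy)
  · obtain ⟨h0, h1⟩ := sq_mul_exp_div_exp_sub_one_sq_mem_Ioo (hs x hx).1
    exact ⟨sqrt_pos.2 (sub_pos.2 h1), (sqrt_lt' one_pos).2 (by linarith)⟩
end

section
/- Let n ≥ 2 and let C be a binary linear code of length n (a ℤ/2ℤ-submodule of (ℤ/2ℤ)^n) in which every nonzero codeword has Hamming weight at least 8. Define the Construction B set H_n = { 4z + 2p + c : z ∈ ℤ^n, p ∈ {0,1}^n with Σ_i p_i even, c ∈ {0,1}^n with c mod 2 ∈ C }. Then the minimum Euclidean distance of H_n equals √8; i.e., for all distinct x, y ∈ H_n one has ‖x − y‖₂ ≥ 2√2, and there exist distinct x, y ∈ H_n with ‖x − y‖₂ = 2√2. -/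
/-!
For `x, y ∈ H` put `d = x - y = 4 (z - z') + 2 (p - p') + (c - c')`; `∑ dᵢ²` is at least the
number of odd `dᵢ`. If `d` is not even, its reduction mod 2 is a nonzero codeword, so at least
8 coordinates are odd. If `d = 2e` with `e` not even, then `c = c'` and `e ≡ p - p'` (mod 2) has
even nonzero weight, hence `∑ dᵢ² ≥ 4 · 2`. Otherwise `d = 4f` with `f ≠ 0` and `∑ dᵢ² ≥ 16`.
The bound is attained by `0` and `2 (eᵢ + eⱼ)`.
-/

open Finset

theorem exists_eq_two_mul_of_intCast_eq_zero {ι : Type*} {d : ι → ℤ}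
    (h : (fun i => (d i : ZMod 2)) = 0) :
    ∃ e : ι → ℤ, ∀ i, d i = 2 * e i :=
  ⟨fun i => d i / 2, fun i =>
    (Int.mul_ediv_cancel' ((ZMod.intCast_zmod_eq_zero_iff_dvd _ 2).1 (congrFun h i))).symm⟩

section

variable {ι : Type*} [Fintype ι]

theorem hammingNorm_le_sum_sq (d : ι → ℤ) : (hammingNorm d : ℤ) ≤ ∑ i, d i ^ 2 := by
  rw [hammingNorm, card_filter, Nat.cast_sum]
  gcongr with i
  split_ifs with h
  · simpa using Int.one_le_abs h |>.trans (Int.le_self_sq _)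
  · positivity

theorem hammingNorm_intCast_le_sum_sq (d : ι → ℤ) :
    (hammingNorm (fun i => (d i : ZMod 2)) : ℤ) ≤ ∑ i, d i ^ 2 :=
  (Nat.cast_le.2 (hammingNorm_comp_le_hammingNorm (fun _ => Int.cast) fun _ => Int.cast_zero)).trans
    (hammingNorm_le_sum_sq d)

theorem hammingNorm_cast_eq_sum (v : ι → ZMod 2) : (hammingNorm v : ZMod 2) = ∑ i, v i := by
  have hone : ∀ a : ZMod 2, a ≠ 0 → a = 1 := by decide
  rw [← sum_filter_ne_zero, sum_congr rfl fun i hi => hone _ (mem_filter.1 hi).2]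
  simp [hammingNorm]

theorem two_le_hammingNorm_of_sum_eq_zero {v : ι → ZMod 2} (hv : v ≠ 0) (hsum : ∑ i, v i = 0) :
    2 ≤ hammingNorm v := by
  have heven : Even (hammingNorm v) := by
    rw [← ZMod.natCast_eq_zero_iff_even, hammingNorm_cast_eq_sum, hsum]
  have hpos := hammingNorm_pos_iff.2 hv
  obtain ⟨k, hk⟩ := heven
  omega

theorem sum_sq_eq_four_mul {d e : ι → ℤ} (h : ∀ i, d i = 2 * e i) :
    ∑ i, d i ^ 2 = 4 * ∑ i, e i ^ 2 := by
  simp only [h, mul_pow, ← mul_sum]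
  norm_num

theorem eight_le_sum_sq {C : Submodule (ZMod 2) (ι → ZMod 2)}
    (hC : ∀ c ∈ C, c ≠ 0 → 8 ≤ hammingNorm c) {d : ι → ℤ} (hd : d ≠ 0)
    (hdC : (fun i => (d i : ZMod 2)) ∈ C)
    (hhalf : ∀ e : ι → ℤ, (∀ i, d i = 2 * e i) → ∑ i, (e i : ZMod 2) = 0) :
    8 ≤ ∑ i, d i ^ 2 := by
  by_cases hodd : (fun i => (d i : ZMod 2)) = 0
  swap
  · exact (Nat.cast_le.2 (hC _ hdC hodd)).trans (hammingNorm_intCast_le_sum_sq d)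
  obtain ⟨e, hde⟩ := exists_eq_two_mul_of_intCast_eq_zero hodd
  rw [sum_sq_eq_four_mul hde]
  by_cases heven : (fun i => (e i : ZMod 2)) = 0
  · obtain ⟨f, hef⟩ := exists_eq_two_mul_of_intCast_eq_zero heven
    have hf : f ≠ 0 := fun hf => hd (funext fun i => by simp [hde, hef, hf])
    have hpos : (0 : ℤ) < hammingNorm f := Nat.cast_pos.2 (hammingNorm_pos_iff.2 hf)
    linarith [sum_sq_eq_four_mul hef, hammingNorm_le_sum_sq f]
  · have hweight := two_le_hammingNorm_of_sum_eq_zero heven (hhalf e hde)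
    linarith [hammingNorm_intCast_le_sum_sq e, (Nat.cast_le (α := ℤ)).2 hweight]

def constructionB (C : Submodule (ZMod 2) (ι → ZMod 2)) : Set (ι → ℤ) :=
  {x | ∃ z p c : ι → ℤ,
    (∀ i, p i = 0 ∨ p i = 1) ∧ Even (∑ i, p i) ∧
    (∀ i, c i = 0 ∨ c i = 1) ∧ (fun i => (c i : ZMod 2)) ∈ C ∧
    x = fun i => 4 * z i + 2 * p i + c i}

namespace constructionB

variable {C : Submodule (ZMod 2) (ι → ZMod 2)} {x y : ι → ℤ}

theorem intCast_sub_mem (hx : x ∈ constructionB C) (hy : y ∈ constructionB C) :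
    (fun i => ((x i - y i : ℤ) : ZMod 2)) ∈ C := by
  obtain ⟨z, p, c, -, -, -, hc, rfl⟩ := hx
  obtain ⟨z', p', c', -, -, -, hc', rfl⟩ := hy
  convert C.sub_mem hc hc' using 1
  funext i
  have h2 : (2 : ZMod 2) = 0 := rfl
  push_cast [Pi.sub_apply]
  linear_combination (2 * ((z i : ZMod 2) - z' i) + (p i - p' i)) * h2

theorem sum_half_sub_eq_zero (hx : x ∈ constructionB C) (hy : y ∈ constructionB C)
    {e : ι → ℤ} (he : ∀ i, x i - y i = 2 * e i) : ∑ i, (e i : ZMod 2) = 0 := by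
  obtain ⟨z, p, c, hp, hpeven, hc, -, rfl⟩ := hx
  obtain ⟨z', p', c', hp', hpeven', hc', -, rfl⟩ := hy
  -- `c i - c' i` is even and lies in `{-1, 0, 1}`, so the `c`-parts cancel
  have he' : ∀ i, e i = 2 * (z i - z' i) + (p i - p' i) := fun i => by
    have := he i
    rcases hc i with h | h <;> rcases hc' i with h' | h' <;> simp only [h, h'] at this <;> omega
  rw [← Int.cast_sum, ZMod.intCast_eq_zero_iff_even]
  simp only [he', sum_add_distrib, sum_sub_distrib, ← mul_sum]
  exact (even_two_mul _).add (hpeven.sub hpeven')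

theorem eight_le_sum_sq_sub (hC : ∀ c ∈ C, c ≠ 0 → 8 ≤ hammingNorm c)
    (hx : x ∈ constructionB C) (hy : y ∈ constructionB C) (hxy : x ≠ y) :
    8 ≤ ∑ i, (x i - y i) ^ 2 :=
  eight_le_sum_sq hC (fun h => hxy (funext fun i => sub_eq_zero.1 (congrFun h i)))
    (intCast_sub_mem hx hy) fun _ => sum_half_sub_eq_zero hx hy

theorem two_mul_mem {p : ι → ℤ} (hp : ∀ i, p i = 0 ∨ p i = 1) (hpeven : Even (∑ i, p i)) :
    (fun i => 2 * p i) ∈ constructionB C :=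
  ⟨0, p, 0, hp, hpeven, fun _ => Or.inl rfl, by simpa [Pi.zero_def] using C.zero_mem,
    by funext; simp⟩

theorem zero_mem : (0 : ι → ℤ) ∈ constructionB C := by
  simpa [← Pi.zero_def] using two_mul_mem (C := C) (p := 0) (by simp) (by simp)

theorem exists_sum_sq_sub_eq_eight (hι : 1 < Fintype.card ι) :
    ∃ x ∈ constructionB C, ∃ y ∈ constructionB C, x ≠ y ∧ ∑ i, (x i - y i) ^ 2 = 8 := by
  classical
  obtain ⟨i, j, hij⟩ := Fintype.one_lt_card_iff.1 hι
  let p : ι → ℤ := fun k => if k ∈ ({i, j} : Finset ι) then 1 else 0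
  have hp : ∀ k, p k = 0 ∨ p k = 1 := fun k => by unfold p; split_ifs <;> simp
  have hsum : ∑ k, p k = 2 := by
    rw [sum_ite_mem, univ_inter, sum_const, card_pair hij]
    rfl
  refine ⟨fun k => 2 * p k, two_mul_mem hp (hsum ▸ even_two), 0, zero_mem, ?_, ?_⟩
  · intro h
    have hi := congrFun h i
    simp [p] at hi
  · have hsq : ∀ k, p k ^ 2 = p k := fun k => by rcases hp k with h | h <;> simp [h]
    simp only [Pi.zero_apply, sub_zero]
    rw [sum_sq_eq_four_mul fun _ => rfl]
    simp [hsq, hsum]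

end constructionB

end

theorem constructionB_min_distance
    (n : ℕ) (hn : 2 ≤ n)
    (C : Submodule (ZMod 2) (Fin n → ZMod 2))
    (hC : ∀ c ∈ C, c ≠ 0 → 8 ≤ hammingNorm c)
    (H : Set (Fin n → ℤ))
    (hH : H = {x | ∃ z p c : Fin n → ℤ,
      (∀ i, p i = 0 ∨ p i = 1) ∧ Even (∑ i, p i) ∧
      (∀ i, c i = 0 ∨ c i = 1) ∧ (fun i => (c i : ZMod 2)) ∈ C ∧
      x = fun i => 4 * z i + 2 * p i + c i}) :
    (∀ x ∈ H, ∀ y ∈ H, x ≠ y →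
      2 * Real.sqrt 2 ≤ Real.sqrt (∑ i, ((x i : ℝ) - (y i : ℝ)) ^ 2)) ∧
    (∃ x ∈ H, ∃ y ∈ H, x ≠ y ∧
      Real.sqrt (∑ i, ((x i : ℝ) - (y i : ℝ)) ^ 2) = 2 * Real.sqrt 2) := by
  change H = constructionB C at hH
  subst hH
  have hdist : ∀ x y : Fin n → ℤ, ∑ i, ((x i : ℝ) - y i) ^ 2 = ((∑ i, (x i - y i) ^ 2 : ℤ) : ℝ) :=
    fun x y => by push_cast; rfl
  have hsqrt8 : 2 * Real.sqrt 2 = Real.sqrt ((8 : ℤ) : ℝ) := by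
    rw [show ((8 : ℤ) : ℝ) = 2 ^ 2 * 2 by norm_num, Real.sqrt_mul (by positivity),
      Real.sqrt_sq zero_le_two]
  refine ⟨fun x hx y hy hxy => ?_, ?_⟩
  · rw [hdist, hsqrt8]
    exact Real.sqrt_le_sqrt (Int.cast_le.2 (constructionB.eight_le_sum_sq_sub hC hx hy hxy))
  · obtain ⟨x, hx, y, hy, hxy, h8⟩ :=
      constructionB.exists_sum_sq_sub_eq_eight (C := C) (by rw [Fintype.card_fin]; omega)
    exact ⟨x, hx, y, hy, hxy, by rw [hdist, h8, hsqrt8]⟩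
end
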